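/- arXiv:2604.02588 — 6 statements merged into one kernel-verified Lean document; each statement's English description precedes it below -/
import Mathlib

section
/- Let X be a Banach lattice, (x_n) a sequence in X and x ∈ X. Then (x_n) converges uniformly to x if and only if for every ε > 0 there exists k such that for all m ≥ k one has ‖⋁_{n=k}^m |x_n − x|‖ < ε. -/
/-!
If `|x n - l| ≤ z / m` eventually, the finite suprema of a tail lie below `z / m`, so their
norms are at most `‖z‖ / m`. Conversely, choose indices `φ 0 < φ 1 < ⋯` such that every
finite supremum starting at `φ j` has norm below `2⁻ʲ`, and let `S j` be the supremum of
`|x n - l|` over the block `[φ j, φ (j + 1)]`. Then `∑ j • S j` converges in norm, and its sum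
`z` is a regulator: for `n ≥ φ m` the index `n` lies in a block `j ≥ m`, whence
`|x n - l| ≤ S j ≤ z / j ≤ z / m`.
-/

/-- A sequence `(x n)` in a Banach lattice converges uniformly to `l` if there is a `z`
such that for every `m ≥ 1`, `|x n - l| ≤ z / m` for all but finitely many `n`. -/
def UnifConvergesTo {X : Type*} [NormedAddCommGroup X] [Lattice X] [IsOrderedAddMonoid X]
    [HasSolidNorm X] [NormedSpace ℝ X]
    (x : ℕ → X) (l : X) : Prop :=
  ∃ z : X, ∀ m : ℕ, 1 ≤ m → ∀ᶠ n in Filter.atTop, |x n - l| ≤ (m : ℝ)⁻¹ • z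

open Filter Finset

theorem StrictMono.exists_apply_le_le_apply_succ {φ : ℕ → ℕ} (hφ : StrictMono φ) {m n : ℕ}
    (hn : φ m ≤ n) : ∃ j, m ≤ j ∧ φ j ≤ n ∧ n ≤ φ (j + 1) := by
  have hψ : StrictMono fun i => φ (m + i) := hφ.comp fun _ _ h => by omega
  obtain ⟨i, hi, hi'⟩ := hψ.exists_between_of_tendsto_atTop hψ.tendsto_atTop (x := n + 1)
    (by simpa using Nat.lt_succ_of_le hn)
  exact ⟨m + i, by omega, by omega, by rw [← add_assoc] at hi'; omega⟩

section SolidNorm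

variable {X : Type*} [NormedAddCommGroup X] [Lattice X] [IsOrderedAddMonoid X] [HasSolidNorm X]

theorem norm_le_norm_of_nonneg_of_le {a b : X} (ha : 0 ≤ a) (hab : a ≤ b) : ‖a‖ ≤ ‖b‖ :=
  norm_le_norm_of_abs_le_abs <| by rwa [abs_of_nonneg ha, abs_of_nonneg (ha.trans hab)]

theorem norm_sup'_mono {ι : Type*} {g : ι → X} (hg : ∀ i, 0 ≤ g i) {s t : Finset ι}
    (hst : s ⊆ t) (hs : s.Nonempty) : ‖s.sup' hs g‖ ≤ ‖t.sup' (hs.mono hst) g‖ :=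
  norm_le_norm_of_nonneg_of_le ((hg _).trans (le_sup' g hs.choose_spec)) (sup'_mono g hst hs)

theorem eventually_forall_norm_sup'_Icc_lt {g : ℕ → X} (hg : ∀ n, 0 ≤ g n) {ε : ℝ}
    (h : ∃ k : ℕ, ∀ m : ℕ, ∀ h : k ≤ m, ‖(Icc k m).sup' (nonempty_Icc.2 h) g‖ < ε) :
    ∀ᶠ k in atTop, ∀ m : ℕ, ∀ h : k ≤ m, ‖(Icc k m).sup' (nonempty_Icc.2 h) g‖ < ε := by
  obtain ⟨k₀, hk₀⟩ := h
  filter_upwards [eventually_ge_atTop k₀] with k hk m hkm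
  exact (norm_sup'_mono hg (Icc_subset_Icc_left hk) _).trans_lt (hk₀ m (hk.trans hkm))

end SolidNorm

theorem summable_natCast_smul_of_norm_le_half_pow {E : Type*} [NormedAddCommGroup E]
    [NormedSpace ℝ E] [CompleteSpace E] {S : ℕ → E} (hS : ∀ j, ‖S j‖ ≤ (1 / 2 : ℝ) ^ j) :
    Summable fun j : ℕ => (j : ℝ) • S j := by
  have hgeom : Summable fun j : ℕ => (j : ℝ) ^ 1 * (1 / 2 : ℝ) ^ j :=
    summable_pow_mul_geometric_of_norm_lt_one 1 (by norm_num)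
  refine .of_norm_bounded (by simpa only [pow_one] using hgeom) fun j => ?_
  rw [norm_smul, Real.norm_natCast]
  exact mul_le_mul_of_nonneg_left (hS j) j.cast_nonneg

section UnifConvergesTo

variable {X : Type*} [NormedAddCommGroup X] [Lattice X] [IsOrderedAddMonoid X] [HasSolidNorm X]
  [NormedSpace ℝ X] {x : ℕ → X} {l : X}

theorem UnifConvergesTo.exists_norm_sup'_Icc_lt (hx : UnifConvergesTo x l) {ε : ℝ}
    (hε : 0 < ε) : ∃ k : ℕ, ∀ m : ℕ, ∀ h : k ≤ m,
      ‖(Icc k m).sup' (nonempty_Icc.2 h) (fun n => |x n - l|)‖ < ε := by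
  obtain ⟨z, hz⟩ := hx
  obtain ⟨M, hM⟩ := exists_nat_gt (‖z‖ / ε)
  have hM₀ : (0 : ℝ) < M := (div_nonneg (norm_nonneg z) hε.le).trans_lt hM
  obtain ⟨k, hk⟩ := eventually_atTop.1 (hz M (mod_cast hM₀))
  refine ⟨k, fun m hkm => ?_⟩
  set g : ℕ → X := fun n => |x n - l|
  calc ‖(Icc k m).sup' (nonempty_Icc.2 hkm) g‖
      ≤ ‖(M : ℝ)⁻¹ • z‖ :=
        norm_le_norm_of_nonneg_of_le ((abs_nonneg _).trans (le_sup' g (left_mem_Icc.2 hkm)))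
          (sup'_le _ _ fun n hn => hk n (mem_Icc.1 hn).1)
    _ = ‖z‖ / M := by rw [norm_smul, norm_inv, Real.norm_natCast, inv_mul_eq_div]
    _ < ε := (div_lt_iff₀ hM₀).2 <| by rwa [div_lt_iff₀ hε, mul_comm] at hM

theorem unifConvergesTo_of_blocks [PosSMulMono ℝ X] {φ : ℕ → ℕ} (hφ : StrictMono φ)
    {S : ℕ → X} {z : X} (hS : ∀ j : ℕ, (j : ℝ) • S j ≤ z)
    (hxS : ∀ j n, φ j ≤ n → n ≤ φ (j + 1) → |x n - l| ≤ S j) :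
    UnifConvergesTo x l := by
  have hz₀ : 0 ≤ z := by simpa using hS 0
  refine ⟨z, fun m hm => eventually_atTop.2 ⟨φ m, fun n hn => ?_⟩⟩
  obtain ⟨j, hmj, hjn, hnj⟩ := hφ.exists_apply_le_le_apply_succ hn
  have hm₀ : (0 : ℝ) < m := mod_cast hm
  have hj₀ : (0 : ℝ) < j := hm₀.trans_le (mod_cast hmj)
  calc |x n - l| ≤ S j := hxS j n hjn hnj
    _ ≤ (j : ℝ)⁻¹ • z := (le_inv_smul_iff_of_pos hj₀).2 (hS j)
    _ ≤ (m : ℝ)⁻¹ • z := smul_le_smul_of_nonneg_right (inv_anti₀ hm₀ (mod_cast hmj)) hz₀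

theorem unifConvergesTo_of_forall_norm_sup'_Icc_lt [PosSMulMono ℝ X] [CompleteSpace X]
    (h : ∀ ε : ℝ, 0 < ε → ∃ k : ℕ, ∀ m : ℕ, ∀ h : k ≤ m,
      ‖(Icc k m).sup' (nonempty_Icc.2 h) (fun n => |x n - l|)‖ < ε) :
    UnifConvergesTo x l := by
  set g : ℕ → X := fun n => |x n - l|
  have hg : ∀ n, 0 ≤ g n := fun n => abs_nonneg _
  obtain ⟨φ, hφ, hφg⟩ := extraction_forall_of_eventually fun j =>
    eventually_forall_norm_sup'_Icc_lt hg (h ((1 / 2 : ℝ) ^ j) (by positivity))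
  have hφ₁ : ∀ j, φ j ≤ φ (j + 1) := fun j => (hφ j.lt_succ_self).le
  set S : ℕ → X := fun j => (Icc (φ j) (φ (j + 1))).sup' (nonempty_Icc.2 (hφ₁ j)) g
  have hS₀ : ∀ j : ℕ, 0 ≤ (j : ℝ) • S j := fun j =>
    smul_nonneg j.cast_nonneg ((hg _).trans (le_sup' g (left_mem_Icc.2 (hφ₁ j))))
  have hsum := summable_natCast_smul_of_norm_le_half_pow fun j => (hφg j _ (hφ₁ j)).le
  exact unifConvergesTo_of_blocks hφ (S := S) (fun j => hsum.le_tsum j fun i _ => hS₀ i)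
    fun j n hjn hnj => le_sup' g (mem_Icc.2 ⟨hjn, hnj⟩)

end UnifConvergesTo

theorem stmt0 {X : Type*} [NormedAddCommGroup X] [Lattice X] [IsOrderedAddMonoid X]
    [HasSolidNorm X] [NormedSpace ℝ X] [CompleteSpace X]
    [PosSMulStrictMono ℝ X] (x : ℕ → X) (l : X) :
    UnifConvergesTo x l ↔
      ∀ ε : ℝ, 0 < ε → ∃ k : ℕ, ∀ m : ℕ, ∀ h : k ≤ m,
        ‖(Finset.Icc k m).sup' (Finset.nonempty_Icc.2 h) (fun n => |x n - l|)‖ < ε :=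
  ⟨fun hx _ => hx.exists_norm_sup'_Icc_lt, unifConvergesTo_of_forall_norm_sup'_Icc_lt⟩
end

section
/- Let X be a separable Banach lattice, (x_n) a sequence in X and x ∈ X. Then (x_n) order converges to x if and only if (x_n) σ-order converges to x. -/
/-- A sequence `(x n)` in a Banach lattice order converges to `l` if there exist a nonempty
directed preorder `(I, r)` and an antitone net `(z i)` indexed by `I` whose range has `0` as its
greatest lower bound, such that for every `i`, `|x n - l| ≤ z i` for all but finitely many `n`. -/
def OrderConvergesTo {X : Type*} [NormedAddCommGroup X] [Lattice X] [IsOrderedAddMonoid X] [HasSolidNorm X] (x : ℕ → X) (l : X) : Prop :=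
  ∃ (I : Type) (r : I → I → Prop),
    Nonempty I ∧ (∀ i, r i i) ∧ (∀ i j k, r i j → r j k → r i k) ∧
    (∀ i j, ∃ k, r i k ∧ r j k) ∧
    ∃ z : I → X, (∀ i j, r i j → z j ≤ z i) ∧ IsGLB (Set.range z) 0 ∧
      ∀ i, ∀ᶠ n in Filter.atTop, |x n - l| ≤ z i

/-- A sequence `(x n)` in a Banach lattice σ-order converges to `l` if there exists a decreasing
sequence `z 0 ≥ z 1 ≥ … ≥ 0` whose range has `0` as its greatest lower bound, such that for every
`m`, `|x n - l| ≤ z m` for all but finitely many `n`. -/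
def SigmaOrderConvergesTo {X : Type*} [NormedAddCommGroup X] [Lattice X] [IsOrderedAddMonoid X] [HasSolidNorm X] (x : ℕ → X) (l : X) : Prop :=
  ∃ z : ℕ → X, Antitone z ∧ (∀ m, 0 ≤ z m) ∧ IsGLB (Set.range z) 0 ∧
    ∀ m, ∀ᶠ n in Filter.atTop, |x n - l| ≤ z m

/-!
An antitone net `z` with infimum `0` has a directed-downward range. In a separable metric space
that range contains a countable dense subset; running down the directed set along an enumeration
of it gives an antitone sequence in the range lying below every point of the dense subset. Since
`Set.Ici c` is closed, a lower bound of that sequence bounds the dense subset and hence the whole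
range, so the sequence still has infimum `0` and controls `|x n - l|` as the net did.
-/

open Set

theorem DirectedOn.exists_antitone_le {α : Type*} [Preorder α] {D : Set α}
    (hD : DirectedOn (· ≥ ·) D) {s : ℕ → α} (hs : ∀ k, s k ∈ D) :
    ∃ w : ℕ → α, Antitone w ∧ (∀ k, w k ∈ D) ∧ ∀ k, w k ≤ s k := by
  choose! m hmD hm_left hm_right using hD
  let w : ℕ → α := fun k => Nat.rec (s 0) (fun k wk => m wk (s (k + 1))) k
  have hwD : ∀ k, w k ∈ D := by
    intro k
    induction k with
    | zero => exact hs 0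
    | succ k ih => exact hmD _ ih _ (hs _)
  refine ⟨w, antitone_nat_of_succ_le fun k => hm_left _ (hwD k) _ (hs _), hwD, ?_⟩
  rintro (_ | k)
  · exact le_rfl
  · exact hm_right _ (hwD k) _ (hs _)

theorem DirectedOn.exists_antitone_lowerBounds_eq {X : Type*} [TopologicalSpace X]
    [TopologicalSpace.PseudoMetrizableSpace X] [Preorder X] [ClosedIciTopology X] {D : Set X}
    (hD : DirectedOn (· ≥ ·) D) (hne : D.Nonempty) (hsep : TopologicalSpace.IsSeparable D) :
    ∃ w : ℕ → X, Antitone w ∧ range w ⊆ D ∧ lowerBounds (range w) = lowerBounds D := by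
  obtain ⟨t, htD, htc, hDt⟩ := hsep.exists_countable_dense_subset
  have htne : t.Nonempty := closure_nonempty_iff.1 (hne.mono hDt)
  obtain ⟨s, rfl⟩ := htc.exists_eq_range htne
  obtain ⟨w, hw_anti, hwD, hws⟩ := hD.exists_antitone_le fun k => htD (mem_range_self k)
  refine ⟨w, hw_anti, range_subset_iff.2 hwD, ?_⟩
  refine subset_antisymm (fun c hc => ?_) (lowerBounds_mono_set (range_subset_iff.2 hwD))
  have hcs : c ∈ lowerBounds (range s) := by
    rintro _ ⟨k, rfl⟩
    exact (hc (mem_range_self k)).trans (hws k)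
  rw [← lowerBounds_closure] at hcs
  exact lowerBounds_mono_set hDt hcs

section

variable {X : Type*} [NormedAddCommGroup X] [Lattice X] [IsOrderedAddMonoid X] [HasSolidNorm X]
  {x : ℕ → X} {l : X}

theorem OrderConvergesTo.sigmaOrderConvergesTo [TopologicalSpace.SeparableSpace X]
    (h : OrderConvergesTo x l) : SigmaOrderConvergesTo x l := by
  obtain ⟨I, r, ⟨i₀⟩, -, -, hdir, z, hz_anti, hz_glb, hz_bound⟩ := h
  have hdirected : DirectedOn (· ≥ ·) (range z) :=
    directedOn_range.2 fun i j =>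
      (hdir i j).imp fun _ hk => ⟨hz_anti _ _ hk.1, hz_anti _ _ hk.2⟩
  obtain ⟨w, hw_anti, hw_range, hw_lower⟩ := hdirected.exists_antitone_lowerBounds_eq
    ⟨z i₀, mem_range_self i₀⟩ (TopologicalSpace.IsSeparable.of_separableSpace _)
  refine ⟨w, hw_anti, fun m => hz_glb.1 (hw_range (mem_range_self m)),
    (isGLB_congr hw_lower).2 hz_glb, fun m => ?_⟩
  obtain ⟨i, hi⟩ := hw_range (mem_range_self m)
  exact hi ▸ hz_bound i

theorem SigmaOrderConvergesTo.orderConvergesTo (h : SigmaOrderConvergesTo x l) :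
    OrderConvergesTo x l := by
  obtain ⟨z, hz_anti, -, hz_glb, hz_bound⟩ := h
  exact ⟨ℕ, (· ≤ ·), ⟨0⟩, le_refl, fun _ _ _ => le_trans,
    fun i j => ⟨max i j, le_max_left i j, le_max_right i j⟩, z, fun _ _ => (hz_anti ·), hz_glb,
    hz_bound⟩

end

theorem stmt2_general {X : Type*} [NormedAddCommGroup X] [Lattice X] [IsOrderedAddMonoid X] [HasSolidNorm X]
    [TopologicalSpace.SeparableSpace X] (x : ℕ → X) (l : X) :
    OrderConvergesTo x l ↔ SigmaOrderConvergesTo x l :=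
  ⟨OrderConvergesTo.sigmaOrderConvergesTo, SigmaOrderConvergesTo.orderConvergesTo⟩

theorem stmt2 {X : Type*} [NormedAddCommGroup X] [Lattice X] [IsOrderedAddMonoid X] [HasSolidNorm X] [NormedSpace ℝ X] [CompleteSpace X]
    [PosSMulStrictMono ℝ X] [PosSMulReflectLT ℝ X] [TopologicalSpace.SeparableSpace X] (x : ℕ → X) (l : X) :
    OrderConvergesTo x l ↔ SigmaOrderConvergesTo x l :=
  stmt2_general x l
end

section
/- Let X be a separable Banach lattice. Then the complement in X^ℕ of the set X_{↓0} = {(x_n) ∈ X^ℕ : x_1 ≥ x_2 ≥ … ≥ 0 and inf_n x_n = 0} is an analytic subset of X^ℕ (with the product topology); equivalently, X_{↓0} is coanalytic. -/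
open MeasureTheory

/-- The set of decreasing positive sequences in `X` whose range has `0` as greatest lower
bound. -/
def XDownZero (X : Type*) [NormedAddCommGroup X] [Lattice X] [HasSolidNorm X]
    [IsOrderedAddMonoid X] : Set (ℕ → X) :=
  {z | Antitone z ∧ (∀ n, 0 ≤ z n) ∧ IsGLB (Set.range z) 0}

/-!
A sequence `z` fails to have greatest lower bound `a` exactly when either `a` is not a lower
bound of it, which is an open condition, or some lower bound `b` of `z` satisfies `b ≰ a`. The
pairs `(b, z)` of the second kind form a Borel subset of the Polish space `α × (ι → α)`, so its
projection to the sequence coordinate is analytic. Monotonicity and positivity are closed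
conditions, so they only contribute open sets to the complement.
-/

open Set

namespace MeasureTheory

variable {α : Type*} [TopologicalSpace α]

theorem AnalyticSet.union {s t : Set α} (hs : AnalyticSet s) (ht : AnalyticSet t) :
    AnalyticSet (s ∪ t) := by
  rw [union_eq_iUnion]
  exact AnalyticSet.iUnion fun b => by cases b <;> assumption

theorem _root_.IsOpen.analyticSet [PolishSpace α] {s : Set α} (hs : IsOpen s) :
    AnalyticSet s := by
  simpa using hs.analyticSet_image continuous_id

end MeasureTheory

section LowerBounds

variable {α ι : Type*} [Preorder α]

theorem compl_setOf_isGLB_range (a : α) :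
    {z : ι → α | IsGLB (range z) a}ᶜ = {z | a ∈ lowerBounds (range z)}ᶜ ∪
      Prod.snd '' {p : α × (ι → α) | p.1 ∈ lowerBounds (range p.2) ∧ ¬p.1 ≤ a} := by
  ext z
  simp only [IsGLB, IsGreatest, mem_upperBounds, mem_compl_iff, mem_ofPred_eq, not_and,
    not_forall, mem_union, mem_image, Prod.exists, exists_eq_right, exists_prop]
  tauto

variable [TopologicalSpace α] [OrderClosedTopology α]

theorem isClosed_setOf_fst_mem_lowerBounds_range_snd :
    IsClosed {p : α × (ι → α) | p.1 ∈ lowerBounds (range p.2)} := by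
  simp only [mem_lowerBounds, forall_mem_range, ofPred_forall]
  exact isClosed_iInter fun i =>
    isClosed_le continuous_fst ((continuous_apply i).comp continuous_snd)

theorem isClosed_setOf_mem_lowerBounds_range (a : α) :
    IsClosed {z : ι → α | a ∈ lowerBounds (range z)} :=
  isClosed_setOf_fst_mem_lowerBounds_range_snd.preimage (Continuous.prodMk_right a)

theorem analyticSet_compl_setOf_isGLB_range [PolishSpace α] [Countable ι] (a : α) :
    AnalyticSet {z : ι → α | IsGLB (range z) a}ᶜ := by
  borelize (α × (ι → α))
  rw [compl_setOf_isGLB_range]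
  refine (isClosed_setOf_mem_lowerBounds_range a).isOpen_compl.analyticSet.union ?_
  have hopen : IsOpen {p : α × (ι → α) | ¬p.1 ≤ a} :=
    (isClosed_le continuous_fst continuous_const).isOpen_compl
  exact (isClosed_setOf_fst_mem_lowerBounds_range_snd.measurableSet.inter
    hopen.measurableSet).analyticSet.image_of_continuous continuous_snd

end LowerBounds

theorem stmt4_general {X : Type*} [NormedAddCommGroup X] [Lattice X] [HasSolidNorm X]
    [IsOrderedAddMonoid X] [CompleteSpace X] [TopologicalSpace.SeparableSpace X] :
    MeasureTheory.AnalyticSet ((XDownZero X)ᶜ) := by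
  have hnonneg : IsClosed {z : ℕ → X | ∀ n, 0 ≤ z n} := by
    simpa only [ofPred_forall] using
      isClosed_iInter fun n => isClosed_le continuous_const (continuous_apply n)
  show AnalyticSet ({z : ℕ → X | Antitone z} ∩ ({z | ∀ n, 0 ≤ z n} ∩ {z | IsGLB (range z) 0}))ᶜ
  rw [compl_inter, compl_inter]
  exact isClosed_antitone.isOpen_compl.analyticSet.union
    (hnonneg.isOpen_compl.analyticSet.union (analyticSet_compl_setOf_isGLB_range 0))

theorem stmt4 {X : Type*} [NormedAddCommGroup X] [Lattice X] [HasSolidNorm X]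
    [IsOrderedAddMonoid X] [NormedSpace ℝ X] [CompleteSpace X]
    [PosSMulStrictMono ℝ X] [PosSMulReflectLT ℝ X] [TopologicalSpace.SeparableSpace X] :
    MeasureTheory.AnalyticSet ((XDownZero X)ᶜ) :=
  stmt4_general
end

section
/- Let X be a separable Banach lattice with a countable π-basis. Then the set X_{↓0} = {(x_n) ∈ X^ℕ : x_1 ≥ x_2 ≥ … ≥ 0 and inf_n x_n = 0} is a Borel subset of X^ℕ (with the product topology). -/
/-!
Being decreasing and positive are closed conditions on the coordinates. Given a π-basis `(b m)`,
`0` is the infimum of a positive sequence `z` iff no `b m` is a lower bound of it, i.e. for every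
`m` there is `n` with `b m ≰ z n`; this is a countable intersection of countable unions of open
sets.
-/

open MeasureTheory

theorem isGLB_iff_forall_notMem_lowerBounds {α ι : Type*} [Lattice α] {s : Set α} {a : α}
    {b : ι → α} (hb : ∀ i, a < b i) (hbasis : ∀ x, a < x → ∃ i, b i ≤ x)
    (ha : a ∈ lowerBounds s) : IsGLB s a ↔ ∀ i, b i ∉ lowerBounds s := by
  refine ⟨fun hglb i hi => (hb i).not_ge (hglb.2 hi), fun h => ⟨ha, fun y hy => ?_⟩⟩
  by_contra hya
  obtain ⟨i, hi⟩ := hbasis (a ⊔ y) (left_lt_sup.mpr hya)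
  exact h i fun x hx => hi.trans (sup_le (ha hx) (hy hx))

theorem xDownZero_eq_iInter {X : Type*} [NormedAddCommGroup X] [Lattice X] [HasSolidNorm X]
    [IsOrderedAddMonoid X] {ι : Type*} (b : ι → X) (hbpos : ∀ i, 0 < b i)
    (hbasis : ∀ x : X, 0 < x → ∃ i, b i ≤ x) :
    XDownZero X = (⋂ n, {z | z (n + 1) ≤ z n}) ∩ (⋂ n, {z | 0 ≤ z n}) ∩
      ⋂ i, ⋃ n, {z | ¬ b i ≤ z n} := by
  ext z
  simp only [XDownZero, Set.mem_ofPred_eq, Set.mem_inter_iff, Set.mem_iInter, Set.mem_iUnion]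
  refine ⟨fun ⟨hanti, hpos, hglb⟩ => ⟨⟨fun n => hanti n.le_succ, hpos⟩, ?_⟩,
    fun ⟨⟨hsucc, hpos⟩, h⟩ => ⟨antitone_nat_of_succ_le hsucc, hpos, ?_⟩⟩
  · simpa [mem_lowerBounds] using
      (isGLB_iff_forall_notMem_lowerBounds hbpos hbasis hglb.1).mp hglb
  · refine (isGLB_iff_forall_notMem_lowerBounds hbpos hbasis ?_).mpr ?_
    · simpa [mem_lowerBounds] using hpos
    · simpa [mem_lowerBounds] using h

theorem stmt10_general {X : Type*} [NormedAddCommGroup X] [Lattice X] [HasSolidNorm X]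
    [IsOrderedAddMonoid X]
    (b : ℕ → X) (hbpos : ∀ m, 0 < b m) (hbasis : ∀ x : X, 0 < x → ∃ m, b m < x) :
    MeasurableSet[borel (ℕ → X)] (XDownZero X) := by
  borelize (ℕ → X)
  rw [xDownZero_eq_iInter b hbpos fun x hx => (hbasis x hx).imp fun _ => le_of_lt]
  refine .inter (.inter (.iInter fun n => ?_) (.iInter fun n => ?_))
    (.iInter fun i => .iUnion fun n => ?_)
  · exact (isClosed_le (continuous_apply (n + 1)) (continuous_apply n)).measurableSet
  · exact (isClosed_le continuous_const (continuous_apply n)).measurableSet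
  · exact (isClosed_le continuous_const (continuous_apply n)).isOpen_compl.measurableSet

theorem stmt10 {X : Type*} [NormedAddCommGroup X] [Lattice X] [HasSolidNorm X]
    [IsOrderedAddMonoid X] [NormedSpace ℝ X] [CompleteSpace X]
    [PosSMulStrictMono ℝ X] [TopologicalSpace.SeparableSpace X]
    (b : ℕ → X) (hbpos : ∀ m, 0 < b m) (hbasis : ∀ x : X, 0 < x → ∃ m, b m < x) :
    MeasurableSet[borel (ℕ → X)] (XDownZero X) :=
  stmt10_general b hbpos hbasis
end

section
/- Let X be a Banach lattice, let P be a countable subset of {x ∈ X : x > 0} that is norm-dense in {x ∈ X : x > 0}, and let (z_n) be a sequence in X with z_1 ≥ z_2 ≥ … ≥ 0. Then the following are equivalent: (1) 0 is the greatest lower bound of {z_n : n ∈ ℕ}; (2) there is no Ψ-branch for (z_n) with values in X; (3) there is no Ψ-branch for (z_n) with values in P. -/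
/-- A Ψ-branch for the sequence `(z n)` is a sequence `(y i)` of strictly positive elements with
`‖(y i - z n)⁺‖ ≤ ‖y i‖ / 3 ^ (i + 1)` for all `i` and `n`, and
`‖y (i+1) - y i‖ ≤ ‖y i‖ / 3 ^ (i + 1)` for all `i` (indices here start at `0`, so `y i`
corresponds to the paper's `y_{i+1}` and `3 ^ (i + 1)` to `3^i` there). -/
def PsiBranch {X : Type*} [NormedAddCommGroup X] [Lattice X] [HasSolidNorm X] [IsOrderedAddMonoid X] (z : ℕ → X) (y : ℕ → X) : Prop :=
  (∀ i, 0 < y i) ∧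
  (∀ i n, ‖(y i - z n)⁺‖ ≤ ‖y i‖ / 3 ^ (i + 1)) ∧
  (∀ i, ‖y (i + 1) - y i‖ ≤ ‖y i‖ / 3 ^ (i + 1))

open Filter Topology

/-! A Ψ-branch has geometrically decaying increments, so it converges in norm to some `w` with
`‖w‖ ≥ ‖y 0‖ / 2`, and `‖(y i - z n)⁺‖ → 0` gives `0 < w ≤ z n` for all `n`: then `0` is not the
infimum. Conversely, a lower bound `u > 0` of the `z n` is approximated by points `y i ∈ P`
with `‖y i - u‖ ≤ ‖u‖ / (4 · 3 ^ (i + 1))`; since `(y i - z n)⁺ ≤ (y i - u)⁺`, these form a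
Ψ-branch. -/

lemma exists_lt_mem_lowerBounds_of_not_isGLB {α : Type*} [SemilatticeSup α] {s : Set α} {a : α}
    (ha : a ∈ lowerBounds s) (h : ¬IsGLB s a) : ∃ u ∈ lowerBounds s, a < u := by
  obtain ⟨v, hv, hva⟩ : ∃ v ∈ lowerBounds s, ¬v ≤ a := by
    simpa [IsGLB, IsGreatest, upperBounds, ha] using h
  exact ⟨a ⊔ v, fun x hx => sup_le (ha hx) (hv hx), left_lt_sup.2 hva⟩

section SolidNorm

variable {X : Type*} [NormedAddCommGroup X] [Lattice X] [HasSolidNorm X] [IsOrderedAddMonoid X]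

lemma norm_posPart_sub_le_norm_sub {x u v : X} (h : u ≤ v) : ‖(x - v)⁺‖ ≤ ‖x - u‖ := by
  refine norm_le_norm_of_abs_le_abs ?_
  rw [abs_of_nonneg (posPart_nonneg _)]
  exact (posPart_mono (sub_le_sub_left h x)).trans (sup_le (le_abs_self _) (abs_nonneg _))

namespace PsiBranch

variable {z y : ℕ → X}

lemma abs_norm_succ_sub_norm_le (hy : PsiBranch z y) (i : ℕ) :
    |‖y (i + 1)‖ - ‖y i‖| ≤ ‖y i‖ * (1 / 3) ^ i / 3 := by
  calc |‖y (i + 1)‖ - ‖y i‖| ≤ ‖y (i + 1) - y i‖ := abs_norm_sub_norm_le _ _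
    _ ≤ ‖y i‖ / 3 ^ (i + 1) := hy.2.2 i
    _ = ‖y i‖ * (1 / 3) ^ i / 3 := by rw [pow_succ, one_div_pow]; ring

lemma norm_le (hy : PsiBranch z y) (i : ℕ) : ‖y i‖ ≤ 2 * ‖y 0‖ := by
  -- `(2 - t) (1 + t / 3) ≤ 2 - t / 3` for `0 ≤ t ≤ 1`, so the bound `(2 - 3⁻ⁱ) ‖y 0‖` propagates.
  suffices h : ∀ i, ‖y i‖ ≤ (2 - (1 / 3) ^ i) * ‖y 0‖ by
    nlinarith [h i, pow_pos (by norm_num : (0 : ℝ) < 1 / 3) i, norm_nonneg (y 0)]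
  intro i
  induction i with
  | zero => norm_num
  | succ i ih =>
    have hstep := (abs_le.1 (hy.abs_norm_succ_sub_norm_le i)).2
    have ht : (0 : ℝ) ≤ (1 / 3) ^ i := by positivity
    have ht1 : (1 / 3 : ℝ) ^ i ≤ 1 := pow_le_one₀ (by norm_num) (by norm_num)
    rw [pow_succ]
    nlinarith [mul_le_mul_of_nonneg_right ih ht, mul_nonneg (mul_nonneg (norm_nonneg (y 0)) ht) ht]

lemma half_norm_le (hy : PsiBranch z y) (i : ℕ) : ‖y 0‖ / 2 ≤ ‖y i‖ := by
  -- `(1 + t) (1 - t / 3) ≥ 1 + t / 3` for `0 ≤ t ≤ 1`, so the bound `(1 + 3⁻ⁱ) ‖y 0‖ / 2` propagates.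
  suffices h : ∀ i, (1 + (1 / 3) ^ i) / 2 * ‖y 0‖ ≤ ‖y i‖ by
    nlinarith [h i, pow_pos (by norm_num : (0 : ℝ) < 1 / 3) i, norm_nonneg (y 0)]
  intro i
  induction i with
  | zero => norm_num
  | succ i ih =>
    have hstep := (abs_le.1 (hy.abs_norm_succ_sub_norm_le i)).1
    have ht : (0 : ℝ) ≤ (1 / 3) ^ i := by positivity
    have ht1 : (1 / 3 : ℝ) ^ i ≤ 1 := pow_le_one₀ (by norm_num) (by norm_num)
    rw [pow_succ]
    nlinarith [mul_le_mul_of_nonneg_right ih (by linarith : (0 : ℝ) ≤ 1 - (1 / 3) ^ i / 3),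
      mul_nonneg (mul_nonneg (norm_nonneg (y 0)) ht) (by linarith : (0 : ℝ) ≤ 1 - (1 / 3) ^ i)]

lemma norm_div_three_pow_le (hy : PsiBranch z y) (i : ℕ) :
    ‖y i‖ / 3 ^ (i + 1) ≤ 2 * ‖y 0‖ / 3 * (1 / 3) ^ i := by
  calc ‖y i‖ / 3 ^ (i + 1) ≤ 2 * ‖y 0‖ / 3 ^ (i + 1) := by gcongr; exact hy.norm_le i
    _ = 2 * ‖y 0‖ / 3 * (1 / 3) ^ i := by rw [pow_succ, one_div_pow]; ring

lemma cauchySeq (hy : PsiBranch z y) : CauchySeq y :=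
  cauchySeq_of_le_geometric (1 / 3) (2 * ‖y 0‖ / 3) (by norm_num) fun i => by
    rw [dist_comm, dist_eq_norm]
    exact (hy.2.2 i).trans (hy.norm_div_three_pow_le i)

lemma le_of_tendsto (hy : PsiBranch z y) {w : X} (hw : Tendsto y atTop (𝓝 w)) (n : ℕ) :
    w ≤ z n := by
  have hgeom : Tendsto (fun i : ℕ => 2 * ‖y 0‖ / 3 * (1 / 3 : ℝ) ^ i) atTop (𝓝 0) := by
    simpa using (tendsto_pow_atTop_nhds_zero_of_lt_one (by norm_num : (0 : ℝ) ≤ 1 / 3)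
      (by norm_num)).const_mul (2 * ‖y 0‖ / 3)
  have hzero : Tendsto (fun i => (y i - z n)⁺) atTop (𝓝 0) :=
    squeeze_zero_norm (fun i => (hy.2.1 i n).trans (hy.norm_div_three_pow_le i)) hgeom
  have hlim : Tendsto (fun i => (y i - z n)⁺) atTop (𝓝 (w - z n)⁺) :=
    (continuous_posPart.tendsto _).comp (hw.sub_const (z n))
  exact sub_nonpos.1 (posPart_eq_zero.1 (tendsto_nhds_unique hlim hzero))

lemma not_isGLB_zero [CompleteSpace X] (hy : PsiBranch z y) : ¬IsGLB (Set.range z) 0 := by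
  obtain ⟨w, hw⟩ := cauchySeq_tendsto_of_complete hy.cauchySeq
  have hw_nonneg : 0 ≤ w := ge_of_tendsto' hw fun i => (hy.1 i).le
  have hw_norm : ‖y 0‖ / 2 ≤ ‖w‖ := ge_of_tendsto' hw.norm hy.half_norm_le
  have hy0 : 0 < ‖y 0‖ := norm_pos_iff.2 (hy.1 0).ne'
  intro hglb
  have hw_le : w ≤ 0 := hglb.2 <| Set.forall_mem_range.2 (hy.le_of_tendsto hw)
  rw [le_antisymm hw_le hw_nonneg, norm_zero] at hw_norm
  linarith

end PsiBranch

lemma psiBranch_of_norm_sub_le {z y : ℕ → X} {u : X} (huz : ∀ n, u ≤ z n)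
    (hy : ∀ i, 0 < y i) (hyu : ∀ i, ‖y i - u‖ ≤ ‖u‖ / (4 * 3 ^ (i + 1))) : PsiBranch z y := by
  have hyu_half : ∀ i, ‖y i - u‖ ≤ (‖u‖ / 2) / 3 ^ (i + 1) / 2 := fun i =>
    (hyu i).trans_eq (by ring)
  have hnorm : ∀ i, ‖u‖ / 2 ≤ ‖y i‖ := fun i => by
    have h3 : (1 : ℝ) ≤ 3 ^ (i + 1) := one_le_pow₀ (by norm_num)
    have hsmall : ‖u‖ / 2 / 3 ^ (i + 1) ≤ ‖u‖ / 2 := div_le_self (by positivity) h3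
    linarith [norm_le_norm_add_norm_sub' u (y i), norm_sub_rev u (y i), hyu_half i, norm_nonneg u]
  have hdiv : ∀ i, (‖u‖ / 2) / 3 ^ (i + 1) ≤ ‖y i‖ / 3 ^ (i + 1) := fun i => by
    gcongr; exact hnorm i
  refine ⟨hy, fun i n => ?_, fun i => ?_⟩
  · calc ‖(y i - z n)⁺‖ ≤ ‖y i - u‖ := norm_posPart_sub_le_norm_sub (huz n)
      _ ≤ (‖u‖ / 2) / 3 ^ (i + 1) / 2 := hyu_half i
      _ ≤ ‖y i‖ / 3 ^ (i + 1) := (half_le_self (by positivity)).trans (hdiv i)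
  · have hsucc : ‖y (i + 1) - u‖ ≤ (‖u‖ / 2) / 3 ^ (i + 1) / 2 :=
      (hyu_half (i + 1)).trans (by gcongr <;> norm_num)
    calc ‖y (i + 1) - y i‖ = ‖(y (i + 1) - u) - (y i - u)‖ := by rw [sub_sub_sub_cancel_right]
      _ ≤ ‖y (i + 1) - u‖ + ‖y i - u‖ := norm_sub_le _ _
      _ ≤ ‖y i‖ / 3 ^ (i + 1) := by linarith [hyu_half i, hdiv i]

lemma exists_psiBranch_mem_of_not_isGLB_zero (P : Set X) (hPsub : P ⊆ {x : X | 0 < x})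
    (hPdense : {x : X | 0 < x} ⊆ closure P) {z : ℕ → X} (hz : ∀ n, 0 ≤ z n)
    (h : ¬IsGLB (Set.range z) 0) : ∃ y : ℕ → X, (∀ i, y i ∈ P) ∧ PsiBranch z y := by
  obtain ⟨u, hu_lb, hu⟩ := exists_lt_mem_lowerBounds_of_not_isGLB
    (Set.forall_mem_range.2 hz) h
  have happrox : ∀ i : ℕ, ∃ p ∈ P, ‖p - u‖ ≤ ‖u‖ / (4 * 3 ^ (i + 1)) := fun i => by
    have hε : 0 < ‖u‖ / (4 * 3 ^ (i + 1)) := by have := norm_pos_iff.2 hu.ne'; positivity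
    obtain ⟨p, hp, hpu⟩ := Metric.mem_closure_iff.1 (hPdense hu) _ hε
    exact ⟨p, hp, by rw [← dist_eq_norm, dist_comm]; exact hpu.le⟩
  choose y hyP hyu using happrox
  exact ⟨y, hyP, psiBranch_of_norm_sub_le (Set.forall_mem_range.1 hu_lb)
    (fun i => hPsub (hyP i)) hyu⟩

end SolidNorm

theorem stmt12_general {X : Type*} [NormedAddCommGroup X] [Lattice X] [HasSolidNorm X] [IsOrderedAddMonoid X] [CompleteSpace X]
    (P : Set X) (hPsub : P ⊆ {x : X | 0 < x})
    (hPdense : {x : X | 0 < x} ⊆ closure P)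
    (z : ℕ → X) (hpos : ∀ n, 0 ≤ z n) :
    (IsGLB (Set.range z) 0 ↔ ¬∃ y : ℕ → X, PsiBranch z y) ∧
    (IsGLB (Set.range z) 0 ↔ ¬∃ y : ℕ → X, (∀ i, y i ∈ P) ∧ PsiBranch z y) := by
  have hbranch : ¬IsGLB (Set.range z) 0 → ∃ y : ℕ → X, (∀ i, y i ∈ P) ∧ PsiBranch z y :=
    exists_psiBranch_mem_of_not_isGLB_zero P hPsub hPdense hpos
  refine ⟨⟨?_, ?_⟩, ⟨?_, ?_⟩⟩
  · rintro hglb ⟨y, hy⟩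
    exact hy.not_isGLB_zero hglb
  · refine fun hno => not_not.1 fun h => hno ?_
    obtain ⟨y, -, hy⟩ := hbranch h
    exact ⟨y, hy⟩
  · rintro hglb ⟨y, -, hy⟩
    exact hy.not_isGLB_zero hglb
  · exact fun hno => not_not.1 fun h => hno (hbranch h)

theorem stmt12 {X : Type*} [NormedAddCommGroup X] [Lattice X] [HasSolidNorm X] [IsOrderedAddMonoid X] [NormedSpace ℝ X] [CompleteSpace X]
    [PosSMulStrictMono ℝ X] [PosSMulReflectLT ℝ X]
    (P : Set X) (hPsub : P ⊆ {x : X | 0 < x}) (hPcount : P.Countable)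
    (hPdense : {x : X | 0 < x} ⊆ closure P)
    (z : ℕ → X) (hanti : Antitone z) (hpos : ∀ n, 0 ≤ z n) :
    (IsGLB (Set.range z) 0 ↔ ¬∃ y : ℕ → X, PsiBranch z y) ∧
    (IsGLB (Set.range z) 0 ↔ ¬∃ y : ℕ → X, (∀ i, y i ∈ P) ∧ PsiBranch z y) :=
  stmt12_general P hPsub hPdense z hpos
end

section
/- Let X be a Banach lattice with the Fatou property and let (z_n) be a sequence in X with z_1 ≥ z_2 ≥ … ≥ 0 such that 0 is the greatest lower bound of {z_n : n ∈ ℕ}. Then there is no y ∈ X with y > 0 such that ‖(y − z_n)⁺‖ ≤ ‖y‖/3 for all n. -/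
/-!
Since `z n` decreases to `0`, the elements `(y - z n)⁺` increase to `y`, so the Fatou property gives
`‖y‖ = ⨆ n, ‖(y - z n)⁺‖ ≤ ‖y‖ / 3`, which forces `y = 0`.
-/

open Set

def HasFatouProperty (X : Type*) [NormedAddCommGroup X] [Lattice X] : Prop :=
  ∀ (x : ℕ → X) (l : X), Monotone x → (∀ n, 0 ≤ x n) → (∀ n, x n ≤ l) →
    IsLUB (range x) l → ‖l‖ = ⨆ n, ‖x n‖

section LatticeOrderedGroup

variable {α ι : Type*} [AddCommGroup α] [Lattice α] [IsOrderedAddMonoid α]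

lemma isLUB_range_posPart_sub {z : ι → α} {y : α} (hz : IsGLB (range z) 0) (hy : 0 ≤ y) :
    IsLUB (range fun i => (y - z i)⁺) y := by
  constructor
  · rintro _ ⟨i, rfl⟩
    exact sup_le (sub_le_self y (hz.1 ⟨i, rfl⟩)) hy
  · intro u hu
    have hlower : y - u ∈ lowerBounds (range z) := by
      rintro _ ⟨i, rfl⟩
      exact sub_le_comm.1 ((le_posPart _).trans (hu ⟨i, rfl⟩))
    exact sub_nonpos.1 (hz.2 hlower)

end LatticeOrderedGroup

lemma HasFatouProperty.norm_eq_iSup_norm_posPart_sub {X : Type*} [NormedAddCommGroup X]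
    [Lattice X] [IsOrderedAddMonoid X] (hX : HasFatouProperty X) {z : ℕ → X} (hanti : Antitone z)
    (hglb : IsGLB (range z) 0) {y : X} (hy : 0 ≤ y) :
    ‖y‖ = ⨆ n, ‖(y - z n)⁺‖ := by
  have hlub := isLUB_range_posPart_sub hglb hy
  exact hX _ y (fun m n hmn => posPart_mono (sub_le_sub_left (hanti hmn) y))
    (fun n => posPart_nonneg _) (fun n => hlub.1 ⟨n, rfl⟩) hlub

theorem stmt18_general {X : Type*} [NormedAddCommGroup X] [Lattice X] [IsOrderedAddMonoid X]
    (hFatou : ∀ (x : ℕ → X) (l : X), Monotone x → (∀ n, 0 ≤ x n) → (∀ n, x n ≤ l) →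
      IsLUB (Set.range x) l → ‖l‖ = ⨆ n, ‖x n‖)
    (z : ℕ → X) (hanti : Antitone z) (hglb : IsGLB (Set.range z) 0) :
    ¬∃ y : X, 0 < y ∧ ∀ n, ‖(y - z n)⁺‖ ≤ ‖y‖ / 3 := by
  rintro ⟨y, hy, hbound⟩
  have hnorm : ‖y‖ ≤ ‖y‖ / 3 :=
    calc ‖y‖ = ⨆ n, ‖(y - z n)⁺‖ :=
          HasFatouProperty.norm_eq_iSup_norm_posPart_sub hFatou hanti hglb hy.le
      _ ≤ ‖y‖ / 3 := ciSup_le hbound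
  exact hy.ne' (norm_le_zero_iff.1 (by linarith))

theorem stmt18 {X : Type*} [NormedAddCommGroup X] [Lattice X] [IsOrderedAddMonoid X] [HasSolidNorm X] [NormedSpace ℝ X] [CompleteSpace X]
    [PosSMulStrictMono ℝ X]
    (hFatou : ∀ (x : ℕ → X) (l : X), Monotone x → (∀ n, 0 ≤ x n) → (∀ n, x n ≤ l) →
      IsLUB (Set.range x) l → ‖l‖ = ⨆ n, ‖x n‖)
    (z : ℕ → X) (hanti : Antitone z) (hpos : ∀ n, 0 ≤ z n) (hglb : IsGLB (Set.range z) 0) :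
    ¬∃ y : X, 0 < y ∧ ∀ n, ‖(y - z n)⁺‖ ≤ ‖y‖ / 3 :=
  stmt18_general hFatou z hanti hglb
end
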